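/- arXiv:1001.5243 — 2 statements merged into one kernel-verified Lean document; each statement's English description precedes it below -/
import Mathlib

section
/- Let α, β ∈ V satisfy ⟨α,α⟩ < 0, ⟨β,β⟩ < 0 and ⟨α,β⟩ < 0. Then β can be written as β = q + tα with q ∈ Q̄ and t ≥ 0 if and only if there exists t > 0 with tβ − α ∈ Q̄. -/
open scoped BigOperators

/-- The Minkowski intersection form of signature (1,r) on `ℝ^{r+1}`:
`⟨u,v⟩ = u₀v₀ − u₁v₁ − ⋯ − u_r v_r`. -/
noncomputable def mform (r : ℕ) (u v : Fin (r + 1) → ℝ) : ℝ :=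
  u 0 * v 0 - ∑ i : Fin r, u i.succ * v i.succ

/-- The class `L = (1,0,…,0)` of a line. -/
def lclass (r : ℕ) : Fin (r + 1) → ℝ := fun i => if i = 0 then 1 else 0

/-- The canonical class `K = (−3,1,…,1)`. -/
def kclass (r : ℕ) : Fin (r + 1) → ℝ := fun i => if i = 0 then -3 else 1

/-- `Q = {α : ⟨α,α⟩ ≥ 0, ⟨α,L⟩ > 0}`. -/
def Qset (r : ℕ) : Set (Fin (r + 1) → ℝ) :=
  {α | 0 ≤ mform r α α ∧ 0 < mform r α (lclass r)}

/-- `Q̄ = {α : ⟨α,α⟩ ≥ 0, ⟨α,L⟩ ≥ 0}`. -/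
def Qbar (r : ℕ) : Set (Fin (r + 1) → ℝ) :=
  {α | 0 ≤ mform r α α ∧ 0 ≤ mform r α (lclass r)}

/-! `Q̄` is a cone and `β ∉ Q̄`, so `t ≠ 0` in `β = q + tα`, and dividing by `t` gives
`t⁻¹β − α = t⁻¹q ∈ Q̄`; conversely `β = t⁻¹(tβ − α) + t⁻¹α`. -/

section Cone

variable {K V : Type*} [Field K] [LinearOrder K] [IsStrictOrderedRing K]
  [AddCommGroup V] [Module K V]

theorem exists_mem_add_smul_iff_exists_smul_sub_mem {S : Set V}
    (hS : ∀ c : K, 0 < c → ∀ x ∈ S, c • x ∈ S) {α β : V} (hβ : β ∉ S) :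
    (∃ q ∈ S, ∃ t : K, 0 ≤ t ∧ β = q + t • α) ↔ ∃ t : K, 0 < t ∧ t • β - α ∈ S := by
  constructor
  · rintro ⟨q, hq, t, ht, rfl⟩
    have ht₀ : t ≠ 0 := by
      rintro rfl
      exact hβ (by simpa using hq)
    have ht_pos : 0 < t := lt_of_le_of_ne ht (Ne.symm ht₀)
    refine ⟨t⁻¹, inv_pos.mpr ht_pos, ?_⟩
    have hrewrite : t⁻¹ • (q + t • α) - α = t⁻¹ • q := by
      rw [smul_add, smul_smul, inv_mul_cancel₀ ht₀, one_smul, add_sub_cancel_right]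
    rw [hrewrite]
    exact hS _ (inv_pos.mpr ht_pos) q hq
  · rintro ⟨t, ht, hmem⟩
    refine ⟨t⁻¹ • (t • β - α), hS _ (inv_pos.mpr ht) _ hmem, t⁻¹, (inv_pos.mpr ht).le, ?_⟩
    rw [smul_sub, smul_smul, inv_mul_cancel₀ ht.ne', one_smul, sub_add_cancel]

end Cone

lemma mform_smul_left (r : ℕ) (c : ℝ) (u v : Fin (r + 1) → ℝ) :
    mform r (c • u) v = c * mform r u v := by
  simp only [mform, Pi.smul_apply, smul_eq_mul, mul_sub, Finset.mul_sum, mul_assoc]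

lemma mform_smul_right (r : ℕ) (c : ℝ) (u v : Fin (r + 1) → ℝ) :
    mform r u (c • v) = c * mform r u v := by
  simp only [mform, Pi.smul_apply, smul_eq_mul, mul_sub, Finset.mul_sum]
  ring_nf

lemma smul_mem_Qbar (r : ℕ) {c : ℝ} (hc : 0 ≤ c) {q : Fin (r + 1) → ℝ} (hq : q ∈ Qbar r) :
    c • q ∈ Qbar r := by
  obtain ⟨hqq, hqL⟩ := hq
  constructor
  · rw [mform_smul_left, mform_smul_right]
    positivity
  · rw [mform_smul_left]
    positivity

lemma notMem_Qbar_of_mform_self_neg (r : ℕ) {β : Fin (r + 1) → ℝ} (hββ : mform r β β < 0) :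
    β ∉ Qbar r :=
  fun hβ => hββ.not_ge hβ.1

theorem stmt2_general (r : ℕ) (α β : Fin (r + 1) → ℝ)
    (hββ : mform r β β < 0) :
    (∃ q ∈ Qbar r, ∃ t : ℝ, 0 ≤ t ∧ β = q + t • α) ↔
      (∃ t : ℝ, 0 < t ∧ (t • β - α) ∈ Qbar r) :=
  exists_mem_add_smul_iff_exists_smul_sub_mem (fun _ hc _ hq => smul_mem_Qbar r hc.le hq)
    (notMem_Qbar_of_mform_self_neg r hββ)

theorem stmt2 (r : ℕ) (hr : 1 ≤ r) (α β : Fin (r + 1) → ℝ)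
    (hαα : mform r α α < 0) (hββ : mform r β β < 0) (hαβ : mform r α β < 0) :
    (∃ q ∈ Qbar r, ∃ t : ℝ, 0 ≤ t ∧ β = q + t • α) ↔
      (∃ t : ℝ, 0 < t ∧ (t • β - α) ∈ Qbar r) :=
  stmt2_general r α β hββ
end

section
/- Assume r = 9 (so ⟨K,K⟩ = 0 and −K lies on the boundary of Q). Then: (1) every element of Q̄ + ℝ_{≥0}·K lies in the half-space {u ∈ V : ⟨K,u⟩ ≤ 0}; (2) every u ∈ V with ⟨K,u⟩ < 0 can be written as u = q + tK with q ∈ Q and t ≥ 0. Consequently, the closure of Q + ℝ_{≥0}·K equals the half-space {u ∈ V : ⟨K,u⟩ ≤ 0}. -/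
open scoped BigOperators

/-! For `r = 9` the canonical class is isotropic, `⟨K,K⟩ = 0`, so adding multiples of `K` does not
change `⟨K,·⟩ = -3u₀ - ∑ uᵢ`; on `Q̄` this functional is nonpositive by Cauchy–Schwarz,
`|∑ uᵢ| ≤ 3 (∑ uᵢ²)^{1/2} ≤ 3u₀`. Conversely, if `⟨K,u⟩ < 0` then `q = u - tK` satisfies
`⟨q,q⟩ ≥ ⟨u,u⟩ - 2t⟨K,u⟩` (as `⟨K,K⟩ = 9 - r ≥ 0`) and `q₀ = u₀ + 3t`, both eventually positive, so `q ∈ Q` for large `t`.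
The closure statement follows because the open half-space `⟨K,·⟩ < 0` is dense in the closed one. -/

open Finset Filter Topology

section MinkowskiForm

variable {r : ℕ}

lemma mform_comm (u v : Fin (r + 1) → ℝ) : mform r u v = mform r v u := by
  simp only [mform, mul_comm]

noncomputable def mformBilin (r : ℕ) : LinearMap.BilinForm ℝ (Fin (r + 1) → ℝ) :=
  LinearMap.mk₂ ℝ (mform r)
    (fun _ _ _ => by simp only [mform, Pi.add_apply, add_mul, sum_add_distrib]; ring)
    (fun _ _ _ => by simp only [mform, Pi.smul_apply, smul_eq_mul, mul_assoc, ← mul_sum]; ring)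
    (fun _ _ _ => by simp only [mform, Pi.add_apply, mul_add, sum_add_distrib]; ring)
    (fun _ _ _ => by simp only [mform, Pi.smul_apply, smul_eq_mul, mul_left_comm _ _, ← mul_sum]; ring)

@[simp]
lemma mformBilin_apply (u v : Fin (r + 1) → ℝ) : mformBilin r u v = mform r u v := rfl

lemma mform_lclass (u : Fin (r + 1) → ℝ) : mform r u (lclass r) = u 0 := by
  simp [mform, lclass, Fin.succ_ne_zero]

lemma mform_kclass_left (u : Fin (r + 1) → ℝ) :
    mform r (kclass r) u = -3 * u 0 - ∑ i : Fin r, u i.succ := by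
  simp [mform, kclass, Fin.succ_ne_zero]

lemma mform_kclass_self : mform r (kclass r) (kclass r) = 9 - r := by
  simp [mform_kclass_left, kclass, Fin.succ_ne_zero]
  ring

lemma mform_kclass_lclass : mform r (kclass r) (lclass r) = -3 := by
  simp [mform_lclass, kclass]

lemma mform_add_smul_right (k u v : Fin (r + 1) → ℝ) (t : ℝ) :
    mform r k (u + t • v) = mform r k u + t * mform r k v := by
  simp only [← mformBilin_apply, map_add, map_smul, smul_eq_mul]

lemma mform_sub_smul_self (u k : Fin (r + 1) → ℝ) (t : ℝ) :
    mform r (u - t • k) (u - t • k) = mform r u u - 2 * t * mform r k u + t ^ 2 * mform r k k := by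
  simp only [← mformBilin_apply, map_sub, map_smul, LinearMap.sub_apply, LinearMap.smul_apply,
    smul_eq_mul]
  simp only [mformBilin_apply, mform_comm u k]
  ring

lemma continuous_mform_right (k : Fin (r + 1) → ℝ) : Continuous (mform r k) :=
  (mformBilin r k).continuous_of_finiteDimensional

end MinkowskiForm

lemma mform_kclass_nonpos_of_mem_Qbar {r : ℕ} (hr : r ≤ 9) {q : Fin (r + 1) → ℝ}
    (hq : q ∈ Qbar r) : mform r (kclass r) q ≤ 0 := by
  obtain ⟨hqq, hq0⟩ := hq
  rw [mform_lclass] at hq0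
  have hsq : ∑ i : Fin r, q i.succ ^ 2 ≤ q 0 ^ 2 := by
    simp only [mform, ← sq] at hqq
    linarith
  have hcs := sq_sum_le_card_mul_sum_sq (s := univ) (f := fun i : Fin r => q i.succ)
  rw [card_univ, Fintype.card_fin] at hcs
  have hr' : (r : ℝ) ≤ 9 := by exact_mod_cast hr
  have hsum : (∑ i : Fin r, q i.succ) ^ 2 ≤ (3 * q 0) ^ 2 := by
    have : 0 ≤ ∑ i : Fin r, q i.succ ^ 2 := by positivity
    nlinarith
  rw [mform_kclass_left]
  linarith [(abs_le_of_sq_le_sq' hsum (by linarith)).1]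

lemma exists_mem_Qset_add_smul_kclass {r : ℕ} (hr : r ≤ 9) {u : Fin (r + 1) → ℝ}
    (hu : mform r (kclass r) u < 0) :
    ∃ q ∈ Qset r, ∃ t : ℝ, 0 ≤ t ∧ u = q + t • kclass r := by
  set c := mform r (kclass r) u
  set t : ℝ := max 0 (max (1 - u 0 / 3) (mform r u u / (2 * c)))
  have ht0 : 0 ≤ t := le_max_left _ _
  have ht1 : 1 - u 0 / 3 ≤ t := (le_max_left _ _).trans (le_max_right _ _)
  have ht2 : t * (2 * c) ≤ mform r u u :=
    (div_le_iff_of_neg (by linarith : 2 * c < 0)).1 ((le_max_right _ _).trans (le_max_right _ _))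
  have hkk : 0 ≤ mform r (kclass r) (kclass r) := by
    rw [mform_kclass_self, sub_nonneg]
    exact_mod_cast hr
  refine ⟨u - t • kclass r, ⟨?_, ?_⟩, t, ht0, (sub_add_cancel _ _).symm⟩
  · rw [mform_sub_smul_self]
    nlinarith
  · simp only [mform_lclass, Pi.sub_apply, Pi.smul_apply, kclass, ↓reduceIte, smul_eq_mul]
    linarith

lemma setOf_nonpos_subset_closure_setOf_neg {E : Type*} [AddCommGroup E] [Module ℝ E]
    [TopologicalSpace E] [ContinuousAdd E] [ContinuousSMul ℝ E] (f : E →ₗ[ℝ] ℝ) {v : E}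
    (hv : f v < 0) : {x | f x ≤ 0} ⊆ closure {x | f x < 0} := by
  intro x hx
  have h : Tendsto (fun t : ℝ => x + t • v) (𝓝[>] 0) (𝓝 x) := by
    have hc : Continuous fun t : ℝ => x + t • v := by fun_prop
    simpa using (hc.tendsto 0).mono_left nhdsWithin_le_nhds
  refine mem_closure_of_tendsto h (eventually_nhdsWithin_of_forall fun t (ht : 0 < t) => ?_)
  show f (x + t • v) < 0
  rw [map_add, map_smul, smul_eq_mul]
  linarith [mul_neg_of_pos_of_neg ht hv, hx.out]

theorem stmt7 (r : ℕ) (hr : r = 9) :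
    (∀ u : Fin (r + 1) → ℝ, (∃ q ∈ Qbar r, ∃ t : ℝ, 0 ≤ t ∧ u = q + t • kclass r) →
      mform r (kclass r) u ≤ 0) ∧
    (∀ u : Fin (r + 1) → ℝ, mform r (kclass r) u < 0 →
      ∃ q ∈ Qset r, ∃ t : ℝ, 0 ≤ t ∧ u = q + t • kclass r) ∧
    closure {u : Fin (r + 1) → ℝ | ∃ q ∈ Qset r, ∃ t : ℝ, 0 ≤ t ∧ u = q + t • kclass r} =
      {u : Fin (r + 1) → ℝ | mform r (kclass r) u ≤ 0} := by
  subst hr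
  have cone_nonpos : ∀ u : Fin 10 → ℝ,
      (∃ q ∈ Qbar 9, ∃ t : ℝ, 0 ≤ t ∧ u = q + t • kclass 9) → mform 9 (kclass 9) u ≤ 0 := by
    rintro u ⟨q, hq, t, -, rfl⟩
    rw [mform_add_smul_right, mform_kclass_self]
    simpa using mform_kclass_nonpos_of_mem_Qbar le_rfl hq
  refine ⟨cone_nonpos, fun u => exists_mem_Qset_add_smul_kclass le_rfl, ?_⟩
  apply subset_antisymm
  · refine closure_minimal ?_ (isClosed_le (continuous_mform_right (kclass 9)) continuous_const)
    rintro u ⟨q, hq, t, ht, rfl⟩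
    exact cone_nonpos _ ⟨q, ⟨hq.1, hq.2.le⟩, t, ht, rfl⟩
  · refine (setOf_nonpos_subset_closure_setOf_neg (mformBilin 9 (kclass 9)) (v := lclass 9) ?_).trans
      (closure_mono fun u hu => exists_mem_Qset_add_smul_kclass le_rfl hu)
    simp [mform_kclass_lclass]
end
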